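/- If the rewrite rule R = (∇ ⊢ l → r) is closed, then a closed rewrite step implies a nominal rewrite step in an extended context: Δ ⊢ s →c_R t implies there exists a freshness context Γ whose atoms avoid atms(Δ,s,t) such that Δ ∪ Γ ⊢ s →_R t. -/

import Mathlib

/-! Nominal terms: atoms, permutations, terms, actions, freshness, α-equivalence,
nominal rewriting and nominal algebra, closed rewriting. -/

abbrev Atom := ℕ
abbrev Unknown := ℕ

/-- Finitely supported permutations of atoms. -/
def FinPerm := {π : Equiv.Perm Atom // {a | π a ≠ a}.Finite}

namespace FinPerm

instance : CoeFun FinPerm (fun _ => Atom → Atom) := ⟨fun π => π.1⟩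

def id : FinPerm := ⟨Equiv.refl Atom, by simp⟩

/-- `comp π π'` is `π ∘ π'` (first apply `π'`, then `π`). -/
def comp (π π' : FinPerm) : FinPerm :=
  ⟨π'.1.trans π.1, ((π.2.union π'.2).subset (by
    intro a ha
    simp only [Set.mem_setOf_eq, Equiv.trans_apply] at ha
    by_cases h : π'.1 a = a
    · exact Or.inl (by simpa [h] using ha)
    · exact Or.inr h))⟩

def inv (π : FinPerm) : FinPerm :=
  ⟨π.1.symm, π.2.subset (by
    intro a ha h
    exact ha (π.1.symm_apply_eq.mpr h.symm))⟩

def swap (a b : Atom) : FinPerm :=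
  ⟨Equiv.swap a b, (Set.toFinite {a, b}).subset (by
    intro c hc
    by_contra h
    simp only [Set.mem_insert_iff, Set.mem_singleton_iff, not_or] at h
    exact hc (Equiv.swap_apply_of_ne_of_ne h.1 h.2))⟩

/-- The (finite) set of atoms moved by `π`. -/
noncomputable def nontriv (π : FinPerm) : Finset Atom := π.2.toFinset

end FinPerm

/-- Nominal terms: atoms, moderated unknowns `π·X`, abstractions `[a]t`,
and term-formers applied to lists of arguments. -/
inductive Term : Type where
  | atom : Atom → Term
  | var  : FinPerm → Unknown → Term
  | abs  : Atom → Term → Term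
  | app  : ℕ → List Term → Term

/-- Permutation action on terms. -/
def permAct (π : FinPerm) : Term → Term
  | .atom a => .atom (π a)
  | .var π' X => .var (π.comp π') X
  | .abs a t => .abs (π a) (permAct π t)
  | .app f ts => .app f (ts.attach.map fun t => permAct π t.1)
decreasing_by
  all_goals simp_wf
  have := List.sizeOf_lt_of_mem t.2
  omega

/-- Substitutions, represented as total maps (the default value of `X` is `id·X`). -/
def Subst := Unknown → Term

/-- A substitution has finite domain. -/
def Subst.FinDom (σ : Subst) : Prop := {X | σ X ≠ .var FinPerm.id X}.Finite

/-- Substitution action on terms. -/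
def subst (σ : Subst) : Term → Term
  | .atom a => .atom a
  | .var π X => permAct π (σ X)
  | .abs a t => .abs a (subst σ t)
  | .app f ts => .app f (ts.attach.map fun t => subst σ t.1)
decreasing_by
  all_goals simp_wf
  have := List.sizeOf_lt_of_mem t.2
  omega

/-- Composition of substitutions: `(σ.comp θ) X = (Xσ)θ`. -/
def Subst.comp (σ θ : Subst) : Subst := fun X => subst θ (σ X)

/-- `σ∘π`, mapping `X` to `π·(σ X)`. -/
def Subst.permComp (σ : Subst) (π : FinPerm) : Subst := fun X => permAct π (σ X)

mutual
/-- Atoms occurring in a term. -/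
noncomputable def atmsF : Term → Finset Atom
  | .atom a => {a}
  | .var π _ => π.nontriv
  | .abs a t => insert a (atmsF t)
  | .app _ ts => atmsLF ts
noncomputable def atmsLF : List Term → Finset Atom
  | [] => ∅
  | t :: ts => atmsF t ∪ atmsLF ts
end

mutual
/-- Unknowns occurring in a term. -/
def unknF : Term → Finset Unknown
  | .atom _ => ∅
  | .var _ X => {X}
  | .abs _ t => unknF t
  | .app _ ts => unknLF ts
def unknLF : List Term → Finset Unknown
  | [] => ∅
  | t :: ts => unknF t ∪ unknLF ts
end

/-- Freshness contexts: finite sets of primitive constraints `a#X`. -/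
abbrev Ctx := Finset (Atom × Unknown)

def ctxAtoms (Δ : Ctx) : Finset Atom := Δ.image Prod.fst
def ctxUnkns (Δ : Ctx) : Finset Unknown := Δ.image Prod.snd

/-- Derivable freshness judgements `Δ ⊢ a # t`. -/
inductive Fresh (Δ : Ctx) : Atom → Term → Prop where
  | atom {a b} : a ≠ b → Fresh Δ a (.atom b)
  | var {a π X} : (π.inv a, X) ∈ Δ → Fresh Δ a (.var π X)
  | absSame {a t} : Fresh Δ a (.abs a t)
  | absDiff {a b t} : a ≠ b → Fresh Δ a t → Fresh Δ a (.abs b t)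
  | app {a f ts} : (∀ t ∈ ts, Fresh Δ a t) → Fresh Δ a (.app f ts)

/-- Derivable α-equivalence judgements `Δ ⊢ s ≈α t`. -/
inductive Aeq (Δ : Ctx) : Term → Term → Prop where
  | atom {a} : Aeq Δ (.atom a) (.atom a)
  | var {π π' : FinPerm} {X : Unknown} : (∀ a : Atom, (π : Atom → Atom) a ≠ (π' : Atom → Atom) a → (a, X) ∈ Δ) →
      Aeq Δ (.var π X) (.var π' X)
  | absSame {a t u} : Aeq Δ t u → Aeq Δ (.abs a t) (.abs a u)
  | absDiff {a b t u} : a ≠ b → Fresh Δ b t → Aeq Δ (permAct (FinPerm.swap b a) t) u →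
      Aeq Δ (.abs a t) (.abs b u)
  | app {f ts us} : ts.length = us.length → (∀ p ∈ ts.zip us, Aeq Δ p.1 p.2) →
      Aeq Δ (.app f ts) (.app f us)

/-- Subterm relation. -/
inductive Subterm : Term → Term → Prop where
  | refl (t) : Subterm t t
  | abs {s t a} : Subterm s t → Subterm s (.abs a t)
  | app {s t f ts} : t ∈ ts → Subterm s t → Subterm s (.app f ts)

mutual
/-- Number of occurrences of the unknown `X` in a term. -/
def countUnk (X : Unknown) : Term → ℕ
  | .atom _ => 0
  | .var _ Y => if Y = X then 1 else 0
  | .abs _ t => countUnk X t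
  | .app _ ts => countUnkL X ts
def countUnkL (X : Unknown) : List Term → ℕ
  | [] => 0
  | t :: ts => countUnk X t + countUnkL X ts
end

/-- A position: a term with a distinguished unknown occurring exactly once, as `id·X`. -/
structure Position where
  ctx : Term
  hole : Unknown
  once : countUnk hole ctx = 1
  idOnly : ∀ π : FinPerm, Subterm (.var π hole) ctx → π = FinPerm.id

def fillAux (X : Unknown) (u : Term) : Term → Term
  | .atom a => .atom a
  | .var π Y => if Y = X then u else .var π Y
  | .abs a t => .abs a (fillAux X u t)
  | .app f ts => .app f (ts.attach.map fun t => fillAux X u t.1)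
decreasing_by
  all_goals simp_wf
  have := List.sizeOf_lt_of_mem t.2
  omega

/-- `C[u]`: place `u` in the hole of the position `C`. -/
def Position.fill (C : Position) (u : Term) : Term := fillAux C.hole u C.ctx

/-- A rule `∇ ⊢ l → r` (also used for axioms `∇ ⊢ l = r`). -/
structure Rule where
  ctx : Ctx
  lhs : Term
  rhs : Term

noncomputable def Rule.atms (R : Rule) : Finset Atom := ctxAtoms R.ctx ∪ atmsF R.lhs ∪ atmsF R.rhs
def Rule.unkn (R : Rule) : Finset Unknown := ctxUnkns R.ctx ∪ unknF R.lhs ∪ unknF R.rhs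

/-- `Δ ⊢ ∇θ`: every constraint of `∇`, instantiated by `θ`, is derivable from `Δ`. -/
def FreshSubst (Δ N : Ctx) (θ : Subst) : Prop :=
  ∀ p ∈ N, Fresh Δ p.1 (subst θ (.var FinPerm.id p.2))

/-- One-step nominal rewriting with the rule `R` in context `Δ`. -/
def OneStepR (R : Rule) (Δ : Ctx) (s t : Term) : Prop :=
  ∃ (C : Position) (s' : Term) (π : FinPerm) (θ : Subst),
    s = C.fill s' ∧ FreshSubst Δ R.ctx θ ∧
    Aeq Δ s' (permAct π (subst θ R.lhs)) ∧
    Aeq Δ (C.fill (permAct π (subst θ R.rhs))) t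

def OneStep (Rw : Set Rule) (Δ : Ctx) (s t : Term) : Prop := ∃ R ∈ Rw, OneStepR R Δ s t

/-- `Δ ⊢_R s ↔* t`: the reflexive-symmetric-transitive closure, including
α-equivalence, of one-step rewriting. -/
inductive RewEq (Rw : Set Rule) (Δ : Ctx) : Term → Term → Prop where
  | step {s t} : OneStep Rw Δ s t → RewEq Rw Δ s t
  | alpha {s t} : Aeq Δ s t → RewEq Rw Δ s t
  | symm {s t} : RewEq Rw Δ s t → RewEq Rw Δ t s
  | trans {s t u} : RewEq Rw Δ s t → RewEq Rw Δ t u → RewEq Rw Δ s u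

/-- Atoms of a judgement `(Δ, s, t)`. -/
noncomputable def judgeAtms (Δ : Ctx) (s t : Term) : Finset Atom := ctxAtoms Δ ∪ atmsF s ∪ atmsF t

def judgeUnkn (Δ : Ctx) (s t : Term) : Finset Unknown := ctxUnkns Δ ∪ unknF s ∪ unknF t

/-- `Γ` is a fresh context for a set of atoms `A`: its atoms avoid `A`. -/
def FreshFor (Γ : Ctx) (A : Finset Atom) : Prop := ∀ p ∈ Γ, p.1 ∉ A

/-- Nominal algebra equality `Δ ⊢_T s = t`. -/
inductive AlgEq (T : Set Rule) (Δ : Ctx) : Term → Term → Prop where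
  | axm {s t} (R : Rule) (hR : R ∈ T) (Γ : Ctx) (C : Position) (π : FinPerm) (θ : Subst) :
      FreshFor Γ (judgeAtms Δ s t) →
      FreshSubst (Δ ∪ Γ) R.ctx θ →
      Aeq (Δ ∪ Γ) s (C.fill (permAct π (subst θ R.lhs))) →
      Aeq (Δ ∪ Γ) (C.fill (permAct π (subst θ R.rhs))) t →
      AlgEq T Δ s t
  | refl (s) : AlgEq T Δ s s
  | symm {s t} : AlgEq T Δ s t → AlgEq T Δ t s
  | trans {s t u} : AlgEq T Δ s t → AlgEq T Δ t u → AlgEq T Δ s u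

/-- `Rw` is a presentation of the equational theory `T`. -/
def Presents (Rw : Set Rule) (T : Set Rule) : Prop :=
  ∀ R : Rule, R ∈ T ↔ (R ∈ Rw ∨ Rule.mk R.ctx R.rhs R.lhs ∈ Rw)

/-- Structural renaming of atoms (by a permutation `τ`) and unknowns (by `ρ`). -/
def renameT (τ : FinPerm) (ρ : Unknown → Unknown) : Term → Term
  | .atom a => .atom (τ a)
  | .var π X => .var (τ.comp (π.comp τ.inv)) (ρ X)
  | .abs a t => .abs (τ a) (renameT τ ρ t)
  | .app f ts => .app f (ts.attach.map fun t => renameT τ ρ t.1)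
decreasing_by
  all_goals simp_wf
  have := List.sizeOf_lt_of_mem t.2
  omega

def renameCtx (τ : FinPerm) (ρ : Unknown → Unknown) (Δ : Ctx) : Ctx :=
  Δ.image (fun p => (τ p.1, ρ p.2))

def Rule.rename (τ : FinPerm) (ρ : Unknown → Unknown) (R : Rule) : Rule :=
  ⟨renameCtx τ ρ R.ctx, renameT τ ρ R.lhs, renameT τ ρ R.rhs⟩

/-- `R'` is a freshened variant of `R`, avoiding also the atoms `A` and unknowns `U`. -/
def FreshenedVariant (A : Finset Atom) (U : Finset Unknown) (R R' : Rule) : Prop :=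
  ∃ (τ : FinPerm) (ρ : Equiv.Perm Unknown),
    R' = R.rename τ ρ ∧
    (∀ a ∈ R.atms, τ a ∉ A ∪ R.atms) ∧
    (∀ X ∈ R.unkn, (ρ X) ∉ U ∪ R.unkn)

/-- A rule (or axiom) `∇ ⊢ l → r` is closed: a freshened variant of `∇ ⊢ (l,r)` matches
`∇ ⊢ (l,r)` in the context `∇` extended with `atms(R') # unkn(R)`. -/
def Rule.Closed (R : Rule) : Prop :=
  ∃ R' : Rule, FreshenedVariant ∅ ∅ R R' ∧
    ∃ σ : Subst, (∀ X, X ∉ R'.unkn → σ X = .var FinPerm.id X) ∧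
      FreshSubst (R.ctx ∪ R'.atms ×ˢ R.unkn) R'.ctx σ ∧
      Aeq (R.ctx ∪ R'.atms ×ˢ R.unkn) (subst σ R'.lhs) R.lhs ∧
      Aeq (R.ctx ∪ R'.atms ×ˢ R.unkn) (subst σ R'.rhs) R.rhs

/-- One-step closed rewriting `Δ ⊢ s →c_R t`. -/
def ClosedStepR (R : Rule) (Δ : Ctx) (s t : Term) : Prop :=
  ∃ R' : Rule, FreshenedVariant (judgeAtms Δ s t ∪ R.atms) (judgeUnkn Δ s t ∪ R.unkn) R R' ∧
    ∃ (C : Position) (s' : Term) (θ : Subst),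
      s = C.fill s' ∧
      FreshSubst (Δ ∪ R'.atms ×ˢ judgeUnkn Δ s t) R'.ctx θ ∧
      Aeq (Δ ∪ R'.atms ×ˢ judgeUnkn Δ s t) s' (subst θ R'.lhs) ∧
      Aeq (Δ ∪ R'.atms ×ˢ judgeUnkn Δ s t) (C.fill (subst θ R'.rhs)) t

def ClosedStep (Rw : Set Rule) (Δ : Ctx) (s t : Term) : Prop := ∃ R ∈ Rw, ClosedStepR R Δ s t

/-- `Δ ⊢_R s ↔c* t`: reflexive-symmetric-transitive closure, including α-equivalence,
of one-step closed rewriting. -/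
inductive ClosedRewEq (Rw : Set Rule) (Δ : Ctx) : Term → Term → Prop where
  | step {s t} : ClosedStep Rw Δ s t → ClosedRewEq Rw Δ s t
  | alpha {s t} : Aeq Δ s t → ClosedRewEq Rw Δ s t
  | symm {s t} : ClosedRewEq Rw Δ s t → ClosedRewEq Rw Δ t s
  | trans {s t u} : ClosedRewEq Rw Δ s t → ClosedRewEq Rw Δ t u → ClosedRewEq Rw Δ s u

/-!
A freshened variant of `R` is `R.rename τ ρ`, and renaming factors through the action of `τ`:
`renameT τ ρ t = τ·(t[X ↦ τ⁻¹·ρ X])`. Hence a closed step matching the variant with a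
substitution `θ` is a nominal step with `R` itself, permutation `τ` and substitution
`X ↦ (τ⁻¹·ρ X)θ`; the constraints `∇θ` transfer by equivariance of freshness. The extra
context `atms(R')#unkn(Δ,s,t)` is fresh for `(Δ,s,t)` because the atoms of the variant
were chosen outside `atms(Δ,s,t)`.
-/

@[elab_as_elim]
theorem Term.induction {P : Term → Prop}
    (atom : ∀ a, P (.atom a)) (var : ∀ π X, P (.var π X))
    (abs : ∀ a t, P t → P (.abs a t))
    (app : ∀ f ts, (∀ t ∈ ts, P t) → P (.app f ts)) : ∀ t, P t
  | .atom a => atom a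
  | .var π X => var π X
  | .abs a t => abs a t (Term.induction atom var abs app t)
  | .app f ts => app f ts fun t _ => Term.induction atom var abs app t
decreasing_by
  all_goals simp_wf
  all_goals first
    | omega
    | (have := List.sizeOf_lt_of_mem ‹t ∈ ts›; omega)

namespace FinPerm

@[simp] theorem id_apply (a : Atom) : FinPerm.id a = a := rfl

@[simp] theorem comp_apply (π π' : FinPerm) (a : Atom) : (π.comp π') a = π (π' a) := rfl

@[simp] theorem inv_apply_apply (π : FinPerm) (a : Atom) : π.inv (π a) = a :=
  π.1.symm_apply_apply a

@[simp] theorem apply_inv_apply (π : FinPerm) (a : Atom) : π (π.inv a) = a :=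
  π.1.apply_symm_apply a

theorem injective (π : FinPerm) : Function.Injective π := π.1.injective

@[simp] theorem id_comp (π : FinPerm) : FinPerm.id.comp π = π := rfl

theorem comp_assoc (π₁ π₂ π₃ : FinPerm) :
    (π₁.comp π₂).comp π₃ = π₁.comp (π₂.comp π₃) := rfl

@[simp] theorem inv_comp_apply (π π' : FinPerm) (a : Atom) :
    (π.comp π').inv a = π'.inv (π.inv a) := rfl

@[simp] theorem mem_nontriv {π : FinPerm} {a : Atom} : a ∈ π.nontriv ↔ π a ≠ a :=
  Set.Finite.mem_toFinset _

theorem nontriv_conj (τ π : FinPerm) :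
    (τ.comp (π.comp τ.inv)).nontriv = π.nontriv.image τ := by
  ext b
  simp only [mem_nontriv, Finset.mem_image, comp_apply]
  constructor
  · intro h
    exact ⟨τ.inv b, fun he => h (by rw [he, apply_inv_apply]), apply_inv_apply τ b⟩
  · rintro ⟨a, ha, rfl⟩
    rw [inv_apply_apply]
    exact fun h => ha (τ.injective h)

end FinPerm

section Equations

variable (π : FinPerm) (σ : Subst) (τ : FinPerm) (ρ : Unknown → Unknown) (f : ℕ) (ts : List Term)

theorem permAct_app : permAct π (.app f ts) = .app f (ts.map (permAct π)) := by
  rw [permAct]; simp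

theorem subst_app : subst σ (.app f ts) = .app f (ts.map (subst σ)) := by
  rw [subst]; simp

theorem renameT_app : renameT τ ρ (.app f ts) = .app f (ts.map (renameT τ ρ)) := by
  rw [renameT]; simp

end Equations

theorem permAct_id : ∀ t, permAct FinPerm.id t = t := by
  intro t
  induction t using Term.induction with
  | atom a => simp [permAct]
  | var π X => simp [permAct]
  | abs a t ih => simp [permAct, ih]
  | app f ts ih =>
    rw [permAct_app]
    exact congrArg _ ((List.map_congr_left ih).trans (List.map_id ts))

theorem permAct_comp (π π' : FinPerm) :
    ∀ t, permAct (π.comp π') t = permAct π (permAct π' t) := by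
  intro t
  induction t using Term.induction with
  | atom a => simp [permAct]
  | var π'' X => simp [permAct, FinPerm.comp_assoc]
  | abs a t ih => simp [permAct, ih]
  | app f ts ih =>
    simp only [permAct_app, List.map_map]
    exact congrArg _ (List.map_congr_left ih)

theorem subst_permAct (σ : Subst) (π : FinPerm) :
    ∀ t, subst σ (permAct π t) = permAct π (subst σ t) := by
  intro t
  induction t using Term.induction with
  | atom a => simp [permAct, subst]
  | var π' X => simp [permAct, subst, permAct_comp]
  | abs a t ih => simp [permAct, subst, ih]
  | app f ts ih =>
    simp only [permAct_app, subst_app, List.map_map]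
    exact congrArg _ (List.map_congr_left ih)

theorem subst_subst (σ θ : Subst) : ∀ t, subst θ (subst σ t) = subst (σ.comp θ) t := by
  intro t
  induction t using Term.induction with
  | atom a => simp [subst]
  | var π X => simp [subst, subst_permAct, Subst.comp]
  | abs a t ih => simp [subst, ih]
  | app f ts ih =>
    simp only [subst_app, List.map_map]
    exact congrArg _ (List.map_congr_left ih)

theorem subst_var_id (θ : Subst) (X : Unknown) : subst θ (.var FinPerm.id X) = θ X := by
  simp [subst, permAct_id]

theorem Fresh.permAct {Δ : Ctx} {a : Atom} {t : Term} (π : FinPerm) (h : Fresh Δ a t) :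
    Fresh Δ (π a) (permAct π t) := by
  induction h with
  | atom hne =>
    rw [_root_.permAct]
    exact .atom (π.injective.ne hne)
  | var hmem =>
    rw [_root_.permAct]
    exact .var (by simpa using hmem)
  | absSame =>
    rw [_root_.permAct]
    exact .absSame
  | absDiff hne _ ih =>
    rw [_root_.permAct]
    exact .absDiff (π.injective.ne hne) ih
  | app _ ih =>
    rw [permAct_app]
    refine .app fun u hu => ?_
    obtain ⟨v, hv, rfl⟩ := List.mem_map.mp hu
    exact ih v hv

def renamingSubst (τ : FinPerm) (ρ : Unknown → Unknown) : Subst := fun X => .var τ.inv (ρ X)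

theorem renameT_eq_permAct_subst (τ : FinPerm) (ρ : Unknown → Unknown) :
    ∀ t, renameT τ ρ t = permAct τ (subst (renamingSubst τ ρ) t) := by
  intro t
  induction t using Term.induction with
  | atom a => simp [renameT, permAct, subst]
  | var π X => simp [renameT, permAct, subst, renamingSubst]
  | abs a t ih => simp [renameT, permAct, subst, ih]
  | app f ts ih =>
    simp only [renameT_app, subst_app, permAct_app, List.map_map]
    exact congrArg _ (List.map_congr_left ih)

theorem subst_renameT (τ : FinPerm) (ρ : Unknown → Unknown) (θ : Subst) (t : Term) :
    subst θ (renameT τ ρ t) = permAct τ (subst ((renamingSubst τ ρ).comp θ) t) := by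
  rw [renameT_eq_permAct_subst, subst_permAct, subst_subst]

theorem atmsF_renameT (τ : FinPerm) (ρ : Unknown → Unknown) :
    ∀ t, atmsF (renameT τ ρ t) = (atmsF t).image τ := by
  intro t
  induction t using Term.induction with
  | atom a => simp [renameT, atmsF]
  | var π X =>
    rw [renameT, atmsF, atmsF]
    exact FinPerm.nontriv_conj τ π
  | abs a t ih =>
    rw [renameT, atmsF, atmsF, ih, Finset.image_insert]
  | app f ts ih =>
    rw [renameT_app, atmsF, atmsF]
    induction ts with
    | nil => simp [atmsLF]
    | cons t ts ihts =>
      simp only [List.map_cons, atmsLF, Finset.image_union]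
      rw [ih t List.mem_cons_self, ihts fun u hu => ih u (List.mem_cons_of_mem t hu)]

theorem ctxAtoms_renameCtx (τ : FinPerm) (ρ : Unknown → Unknown) (Δ : Ctx) :
    ctxAtoms (renameCtx τ ρ Δ) = (ctxAtoms Δ).image τ := by
  simp only [ctxAtoms, renameCtx, Finset.image_image, Function.comp_def]

theorem Rule.atms_rename (τ : FinPerm) (ρ : Unknown → Unknown) (R : Rule) :
    (R.rename τ ρ).atms = R.atms.image τ := by
  simp [Rule.atms, Rule.rename, ctxAtoms_renameCtx, atmsF_renameT, Finset.image_union]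

theorem FreshenedVariant.freshFor_atms_product {A : Finset Atom} {U : Finset Unknown}
    {R R' : Rule} (hR' : FreshenedVariant A U R R') (V : Finset Unknown) :
    FreshFor (R'.atms ×ˢ V) A := by
  obtain ⟨τ, ρ, rfl, hτ, -⟩ := hR'
  intro p hp
  have hp₁ : p.1 ∈ R.atms.image τ := Rule.atms_rename τ ρ R ▸ (Finset.mem_product.mp hp).1
  obtain ⟨a, ha, hpa⟩ := Finset.mem_image.mp hp₁
  rw [← hpa]
  exact fun hA => hτ a ha (Finset.mem_union_left _ hA)

theorem FreshSubst.of_renameCtx {Δ N : Ctx} {θ : Subst} (τ : FinPerm) (ρ : Unknown → Unknown)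
    (h : FreshSubst Δ (renameCtx τ ρ N) θ) : FreshSubst Δ N ((renamingSubst τ ρ).comp θ) := by
  intro p hp
  have hτp := h (τ p.1, ρ p.2) (Finset.mem_image_of_mem _ hp)
  rw [subst_var_id] at hτp ⊢
  simpa [Subst.comp, renamingSubst, subst] using hτp.permAct τ.inv

theorem oneStepR_of_rename {R : Rule} {Δ : Ctx} {s t s' : Term} {C : Position} {θ : Subst}
    (τ : FinPerm) (ρ : Unknown → Unknown) (hs : s = C.fill s')
    (hθ : FreshSubst Δ (R.rename τ ρ).ctx θ) (hl : Aeq Δ s' (subst θ (R.rename τ ρ).lhs))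
    (hr : Aeq Δ (C.fill (subst θ (R.rename τ ρ).rhs)) t) : OneStepR R Δ s t := by
  rw [Rule.rename, subst_renameT] at hl hr
  exact ⟨C, s', τ, _, hs, hθ.of_renameCtx τ ρ, hl, hr⟩

/-- If the rule `R` is closed then a closed rewrite step implies a nominal rewrite step
in a context extended by a fresh `Γ`. -/
theorem closed_rew_implies_rew (R : Rule) (hR : R.Closed) (Δ : Ctx) (s t : Term)
    (h : ClosedStepR R Δ s t) :
    ∃ Γ : Ctx, FreshFor Γ (judgeAtms Δ s t) ∧ OneStepR R (Δ ∪ Γ) s t := by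
  obtain ⟨R', hR', C, s', θ, hs, hθ, hl, hr⟩ := h
  refine ⟨R'.atms ×ˢ judgeUnkn Δ s t, fun p hp hA => ?_, ?_⟩
  · exact hR'.freshFor_atms_product _ p hp (Finset.mem_union_left _ hA)
  · obtain ⟨τ, ρ, rfl, -, -⟩ := hR'
    exact oneStepR_of_rename τ ρ hs hθ hl hr
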